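/- Let Γ ⊆ ℤ² be a finite set. For every state φ on Γ there is no infinite legal toppling sequence for φ; equivalently, every legal toppling sequence for φ terminates after finitely many steps. -/

import Mathlib

/-! Topplings only move sand between neighbours, so the total sand on the finite set `T` of
vertices of `Γ` and their neighbours is conserved; as legal topplings keep every state
nonnegative, the states reached are bounded on `T`. An infinite legal sequence would make some
vertex of `Γ` topple unboundedly often; take such a `v` with largest first coordinate. Its right
neighbour gains a grain at each toppling of `v` and stays bounded, so it too topples unboundedly
often, contradicting the choice of `v`. -/

/-- The discrete Laplacian on `ℤ × ℤ`: sum over the four grid neighbors minus `4` times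
the value at the point. -/
def lap (H : ℤ × ℤ → ℤ) (v : ℤ × ℤ) : ℤ :=
  H (v.1 + 1, v.2) + H (v.1 - 1, v.2) + H (v.1, v.2 + 1) + H (v.1, v.2 - 1) - 4 * H v

/-- `topCount s i u` is the number of indices `j < i` with `s j = u`
(the toppling count after `i` steps). -/
def topCount (s : ℕ → ℤ × ℤ) (i : ℕ) (u : ℤ × ℤ) : ℤ :=
  (((Finset.range i).filter (fun j => s j = u)).card : ℤ)

/-- The first `m` terms of `s` form a legal toppling sequence for the state `φ` on `Γ`:
each toppled vertex lies in `Γ` and is unstable (has ≥ 4 grains) at the moment of toppling. -/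
def Legal (Γ : Set (ℤ × ℤ)) (φ : ℤ × ℤ → ℤ) (s : ℕ → ℤ × ℤ) (m : ℕ) : Prop :=
  ∀ i < m, s i ∈ Γ ∧ 4 ≤ φ (s i) + lap (topCount s i) (s i)

open Finset

section Laplacian

lemma lap_add (H K : ℤ × ℤ → ℤ) (v : ℤ × ℤ) : lap (H + K) v = lap H v + lap K v := by
  simp only [lap, Pi.add_apply]
  ring

lemma lap_single_self (w : ℤ × ℤ) : lap (Pi.single w 1) w = -4 := by
  simp [lap, Prod.ext_iff]

lemma lap_single_nonneg_of_ne {v w : ℤ × ℤ} (h : v ≠ w) : 0 ≤ lap (Pi.single w 1) v := by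
  simp only [lap, Pi.single_apply, if_neg h]
  split_ifs <;> norm_num

lemma le_lap_right {H : ℤ × ℤ → ℤ} (hH : ∀ w, 0 ≤ H w) (v : ℤ × ℤ) :
    H v - 4 * H (v.1 + 1, v.2) ≤ lap H (v.1 + 1, v.2) := by
  simp only [lap, add_sub_cancel_right]
  linarith [hH (v.1 + 1 + 1, v.2), hH (v.1 + 1, v.2 + 1), hH (v.1 + 1, v.2 - 1)]

def closedNbhd (w : ℤ × ℤ) : Finset (ℤ × ℤ) :=
  {w, (w.1 + 1, w.2), (w.1 - 1, w.2), (w.1, w.2 + 1), (w.1, w.2 - 1)}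

lemma sum_lap_single_eq_zero {w : ℤ × ℤ} {T : Finset (ℤ × ℤ)} (hT : closedNbhd w ⊆ T) :
    ∑ v ∈ T, lap (Pi.single w 1) v = 0 := by
  simp only [closedNbhd, insert_subset_iff, singleton_subset_iff] at hT
  obtain ⟨h0, h1, h2, h3, h4⟩ := hT
  have hlap : ∀ v : ℤ × ℤ, lap (Pi.single w 1) v =
      (if v = (w.1 - 1, w.2) then 1 else 0) + (if v = (w.1 + 1, w.2) then 1 else 0) +
      (if v = (w.1, w.2 - 1) then 1 else 0) + (if v = (w.1, w.2 + 1) then 1 else 0) -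
      4 * (if v = w then 1 else 0) := by
    intro v
    simp only [lap, Pi.single_apply, Prod.ext_iff, ← eq_sub_iff_add_eq, sub_eq_iff_eq_add]
  simp [hlap, sum_add_distrib, sum_sub_distrib, h0, h1, h2, h3, h4]

end Laplacian

section Toppling

variable (s : ℕ → ℤ × ℤ)

lemma topCount_nonneg (i : ℕ) (v : ℤ × ℤ) : 0 ≤ topCount s i v := by
  simp [topCount]

lemma topCount_succ (i : ℕ) : topCount s (i + 1) = topCount s i + Pi.single (s i) 1 := by
  ext v
  simp only [topCount, range_add_one, filter_insert, Pi.add_apply, Pi.single_apply, eq_comm]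
  split_ifs with h
  · rw [card_insert_of_notMem (by simp)]
    push_cast
    rfl
  · simp

lemma exists_eq_of_not_bddAbove_topCount {v : ℤ × ℤ}
    (hv : ¬ BddAbove (Set.range fun i => topCount s i v)) : ∃ j, s j = v := by
  by_contra! h
  exact hv ⟨0, by rintro _ ⟨i, rfl⟩; simp [topCount, h]⟩

lemma sum_topCount {A : Finset (ℤ × ℤ)} (hA : ∀ j, s j ∈ A) (i : ℕ) :
    ∑ v ∈ A, topCount s i v = i := by
  have := card_eq_sum_card_fiberwise (s := range i) (t := A) (f := s) fun j _ => hA j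
  simp only [card_range] at this
  simp only [topCount]
  exact_mod_cast this.symm

lemma exists_not_bddAbove_topCount {A : Finset (ℤ × ℤ)} (hA : ∀ j, s j ∈ A) :
    ∃ v ∈ A, ¬ BddAbove (Set.range fun i => topCount s i v) := by
  by_contra! hbdd
  choose! C hC using hbdd
  set n := (∑ v ∈ A, C v).toNat + 1
  have hle : (n : ℤ) ≤ ∑ v ∈ A, C v := by
    rw [← sum_topCount s hA n]
    exact sum_le_sum fun v hv => hC v hv ⟨n, rfl⟩
  omega

end Toppling

section Sandpile

variable (φ : ℤ × ℤ → ℤ) (s : ℕ → ℤ × ℤ)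

/-- The state `φ + ΔH_i` reached after the first `i` topplings of `s`. -/
def stateAfter (i : ℕ) (v : ℤ × ℤ) : ℤ :=
  φ v + lap (topCount s i) v

lemma stateAfter_zero (v : ℤ × ℤ) : stateAfter φ s 0 v = φ v := by
  simp [stateAfter, topCount, lap]

lemma stateAfter_succ (i : ℕ) (v : ℤ × ℤ) :
    stateAfter φ s (i + 1) v = stateAfter φ s i v + lap (Pi.single (s i) 1) v := by
  rw [stateAfter, stateAfter, topCount_succ, lap_add, add_assoc]

variable {φ s}

lemma stateAfter_nonneg (hφ : ∀ v, 0 ≤ φ v) (hs : ∀ i, 4 ≤ stateAfter φ s i (s i)) (i : ℕ)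
    (v : ℤ × ℤ) : 0 ≤ stateAfter φ s i v := by
  induction i generalizing v with
  | zero => simpa [stateAfter_zero] using hφ v
  | succ i ih =>
    rw [stateAfter_succ]
    by_cases h : v = s i
    · subst h
      linarith [hs i, lap_single_self (s i)]
    · linarith [ih v, lap_single_nonneg_of_ne h]

lemma sum_stateAfter {T : Finset (ℤ × ℤ)} (hT : ∀ i, closedNbhd (s i) ⊆ T) (i : ℕ) :
    ∑ v ∈ T, stateAfter φ s i v = ∑ v ∈ T, φ v := by
  induction i with
  | zero => simp [stateAfter_zero]
  | succ i ih => simp [stateAfter_succ, sum_add_distrib, ih, sum_lap_single_eq_zero (hT i)]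

lemma stateAfter_le_sum (hφ : ∀ v, 0 ≤ φ v) (hs : ∀ i, 4 ≤ stateAfter φ s i (s i))
    {T : Finset (ℤ × ℤ)} (hT : ∀ i, closedNbhd (s i) ⊆ T) (i : ℕ) {u : ℤ × ℤ} (hu : u ∈ T) :
    stateAfter φ s i u ≤ ∑ v ∈ T, φ v :=
  sum_stateAfter hT i ▸ single_le_sum (fun v _ => stateAfter_nonneg hφ hs i v) hu

lemma not_bddAbove_topCount_right {v : ℤ × ℤ} {M : ℤ}
    (hM : ∀ i, stateAfter φ s i (v.1 + 1, v.2) ≤ M)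
    (hv : ¬ BddAbove (Set.range fun i => topCount s i v)) :
    ¬ BddAbove (Set.range fun i => topCount s i (v.1 + 1, v.2)) := by
  rintro ⟨C, hC⟩
  refine hv ⟨M - φ (v.1 + 1, v.2) + 4 * C, ?_⟩
  rintro _ ⟨i, rfl⟩
  have hCi : topCount s i (v.1 + 1, v.2) ≤ C := hC ⟨i, rfl⟩
  have hlap := le_lap_right (topCount_nonneg s i) v
  have hMi := hM i
  rw [stateAfter] at hMi
  dsimp only
  linarith

end Sandpile

theorem no_infinite_legal_sequence_general (Γ : Set (ℤ × ℤ)) (hΓ : Γ.Finite) (φ : ℤ × ℤ → ℤ)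
    (hφ0 : ∀ v, 0 ≤ φ v) :
    ¬ ∃ s : ℕ → ℤ × ℤ, ∀ m : ℕ, Legal Γ φ s m := by
  classical
  rintro ⟨s, hs⟩
  have hleg (i : ℕ) : s i ∈ Γ ∧ 4 ≤ stateAfter φ s i (s i) := hs (i + 1) i i.lt_succ_self
  have hsΓ (i : ℕ) : s i ∈ hΓ.toFinset := hΓ.mem_toFinset.mpr (hleg i).1
  set T := hΓ.toFinset.biUnion closedNbhd
  have hT {w : ℤ × ℤ} (hw : w ∈ Γ) : closedNbhd w ⊆ T :=
    subset_biUnion_of_mem _ (hΓ.mem_toFinset.mpr hw)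
  have hbound (i : ℕ) {u : ℤ × ℤ} (hu : u ∈ T) : stateAfter φ s i u ≤ ∑ v ∈ T, φ v :=
    stateAfter_le_sum hφ0 (fun i => (hleg i).2) (fun i => hT (hleg i).1) i hu
  set U := {v | ¬ BddAbove (Set.range fun i => topCount s i v)}
  have hUΓ : U ⊆ Γ := fun v hv =>
    let ⟨j, hj⟩ := exists_eq_of_not_bddAbove_topCount s hv
    hj ▸ (hleg j).1
  obtain ⟨v₀, -, hv₀⟩ := exists_not_bddAbove_topCount s hsΓ
  obtain ⟨v, hvU, hvmax⟩ := U.exists_max_image Prod.fst (hΓ.subset hUΓ) ⟨v₀, hv₀⟩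
  have hright : (v.1 + 1, v.2) ∈ U :=
    not_bddAbove_topCount_right (fun i => hbound i (hT (hUΓ hvU) (by simp [closedNbhd]))) hvU
  linarith [hvmax _ hright]

/-- On a finite `Γ ⊆ ℤ²` every legal toppling sequence terminates: there is no infinite
legal toppling sequence for any state `φ` on `Γ`. -/
theorem no_infinite_legal_sequence (Γ : Set (ℤ × ℤ)) (hΓ : Γ.Finite) (φ : ℤ × ℤ → ℤ)
    (hφ0 : ∀ v, 0 ≤ φ v) (hφΓ : ∀ v, v ∉ Γ → φ v = 0) :
    ¬ ∃ s : ℕ → ℤ × ℤ, ∀ m : ℕ, Legal Γ φ s m :=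
  no_infinite_legal_sequence_general Γ hΓ φ hφ0
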